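/- arXiv:1807.07457 — 6 statements merged into one kernel-verified Lean document; each statement's English description precedes it below -/
import Mathlib

section
/- Let λ be a composition of n and let u, t be column standard λ-tableaux with u ≠ t. Let i be maximal such that the restrictions of u and t to entries ≤ i agree. If t dominates u (i.e., shape(t restricted to entries ≤ m) dominates shape(u restricted to entries ≤ m) for all m ∈ [1,n]), then the column index of i+1 in u is strictly less than the column index of i+1 in t. -/
/-- Partial sum `λ₁ + ⋯ + λ_k` of a 1-indexed sequence of parts. -/
def psum (lam : ℕ → ℕ) (k : ℕ) : ℕ := ∑ i ∈ Finset.Icc 1 k, lam i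

/-- `lam` is a composition of `n` (1-indexed parts, extended by zeros). -/
def IsComp (n : ℕ) (lam : ℕ → ℕ) : Prop :=
  lam 0 = 0 ∧ ∃ N, (∀ i, N < i → lam i = 0) ∧ psum lam N = n

/-- `lam` is a partition of `n` (weakly decreasing parts). -/
def IsPartition (n : ℕ) (lam : ℕ → ℕ) : Prop :=
  IsComp n lam ∧ ∀ i j, 1 ≤ i → i ≤ j → lam j ≤ lam i

/-- Dominance order in the paper's (column) convention: `lam` dominates `mu`
(written `mu ≤ lam`) iff every partial sum of `lam` is at most the
corresponding partial sum of `mu`. -/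
def Dominates (lam mu : ℕ → ℕ) : Prop := ∀ k, psum lam k ≤ psum mu k

/-- Row index of the box containing the entry `k`. -/
def rowT (p : ℕ → ℕ × ℕ) (k : ℕ) : ℕ := (p k).1
/-- Column index of the box containing the entry `k`. -/
def colT (p : ℕ → ℕ × ℕ) (k : ℕ) : ℕ := (p k).2

/-- `p` is the position function of a bijective filling of the skew diagram
`[lam] ∖ [mu]` (1-indexed rows and columns, `lam j` boxes in column `j`)
by the entries `a+1, …, a+n`. -/
def IsSkewTab (lam mu : ℕ → ℕ) (a n : ℕ) (p : ℕ → ℕ × ℕ) : Prop :=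
  (∀ k ∈ Finset.Icc (a+1) (a+n),
      1 ≤ (p k).2 ∧ mu (p k).2 < (p k).1 ∧ (p k).1 ≤ lam (p k).2) ∧
  (∀ k ∈ Finset.Icc (a+1) (a+n), ∀ l ∈ Finset.Icc (a+1) (a+n), p k = p l → k = l) ∧
  (∀ c : ℕ × ℕ, 1 ≤ c.2 → mu c.2 < c.1 → c.1 ≤ lam c.2 →
      ∃ k ∈ Finset.Icc (a+1) (a+n), p k = c)

/-- A straight-shape `lam`-tableau with entries `1, …, n`. -/
def IsTab (lam : ℕ → ℕ) (n : ℕ) (p : ℕ → ℕ × ℕ) : Prop :=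
  IsSkewTab lam (fun _ => 0) 0 n p

/-- Entries increase down each column. -/
def ColStd (a n : ℕ) (p : ℕ → ℕ × ℕ) : Prop :=
  ∀ k ∈ Finset.Icc (a+1) (a+n), ∀ l ∈ Finset.Icc (a+1) (a+n),
    colT p k = colT p l → rowT p k < rowT p l → k < l

/-- Entries increase along each row. -/
def RowStd (a n : ℕ) (p : ℕ → ℕ × ℕ) : Prop :=
  ∀ k ∈ Finset.Icc (a+1) (a+n), ∀ l ∈ Finset.Icc (a+1) (a+n),
    rowT p k = rowT p l → colT p k < colT p l → k < l

/-- Standard skew tableau of shape `lam/mu` with entries `a+1, …, a+n`. -/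
def IsStdSkew (lam mu : ℕ → ℕ) (a n : ℕ) (p : ℕ → ℕ × ℕ) : Prop :=
  IsSkewTab lam mu a n p ∧ ColStd a n p ∧ RowStd a n p

/-- Standard `lam`-tableau with entries `1, …, n`. -/
def IsStd (lam : ℕ → ℕ) (n : ℕ) (p : ℕ → ℕ × ℕ) : Prop :=
  IsStdSkew lam (fun _ => 0) 0 n p

/-- Column standard straight-shape `lam`-tableau. -/
def IsColStdTab (lam : ℕ → ℕ) (n : ℕ) (p : ℕ → ℕ × ℕ) : Prop :=
  IsTab lam n p ∧ ColStd 0 n p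

/-- `i ∈ D(p)`: a descent, `col(i) ≥ col(i+1)`. -/
def inD (a n : ℕ) (p : ℕ → ℕ × ℕ) (i : ℕ) : Prop :=
  a + 1 ≤ i ∧ i + 1 ≤ a + n ∧ colT p (i+1) ≤ colT p i
/-- `i ∈ SD(p)`: a strong descent, `col(i) > col(i+1)`. -/
def inSD (a n : ℕ) (p : ℕ → ℕ × ℕ) (i : ℕ) : Prop :=
  a + 1 ≤ i ∧ i + 1 ≤ a + n ∧ colT p (i+1) < colT p i
/-- `i ∈ WD(p)`: a weak descent, `col(i) = col(i+1)`. -/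
def inWD (a n : ℕ) (p : ℕ → ℕ × ℕ) (i : ℕ) : Prop :=
  a + 1 ≤ i ∧ i + 1 ≤ a + n ∧ colT p (i+1) = colT p i
/-- `i ∈ A(p)`: an ascent, `col(i) < col(i+1)`. -/
def inA (a n : ℕ) (p : ℕ → ℕ × ℕ) (i : ℕ) : Prop :=
  a + 1 ≤ i ∧ i + 1 ≤ a + n ∧ colT p i < colT p (i+1)
/-- `i ∈ SA(p)`: a strong ascent, `row(i) > row(i+1)`. -/
def inSA (a n : ℕ) (p : ℕ → ℕ × ℕ) (i : ℕ) : Prop :=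
  a + 1 ≤ i ∧ i + 1 ≤ a + n ∧ rowT p (i+1) < rowT p i

/-- Descent set of a tableau with entries `1, …, n`. -/
def Dset (n : ℕ) (p : ℕ → ℕ × ℕ) : Set ℕ := {i | inD 0 n p i}

/-- Shape of the restriction of `p` to entries `≤ m`: the number of boxes
of column `j` occupied by entries `≤ m`. -/
def resShape (p : ℕ → ℕ × ℕ) (m j : ℕ) : ℕ :=
  ((Finset.Icc 1 m).filter (fun k => colT p k = j)).card

/-- Extended dominance order on standard tableaux with `n` boxes: `u ≤ t`. -/
def ExtDomLe (n : ℕ) (pu pt : ℕ → ℕ × ℕ) : Prop :=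
  ∀ m ∈ Finset.Icc 1 n, Dominates (fun j => resShape pt m j) (fun j => resShape pu m j)

/-- `i` is the restriction number of `(u,t)`: the restrictions to entries `≤ i`
agree, and `i` is maximal with this property. -/
def RestNum (n : ℕ) (pu pt : ℕ → ℕ × ℕ) (i : ℕ) : Prop :=
  i ≤ n ∧ (∀ k, 1 ≤ k → k ≤ i → pu k = pt k) ∧ (i = n ∨ pu (i+1) ≠ pt (i+1))

/-- `(u,t)` is favourable with restriction number `i`:
`i` lies in the symmetric difference `D(u) ⊕ D(t)`. -/
def Favourable (n : ℕ) (pu pt : ℕ → ℕ × ℕ) (i : ℕ) : Prop :=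
  RestNum n pu pt i ∧
    ((inD 0 n pu i ∧ ¬ inD 0 n pt i) ∨ (inD 0 n pt i ∧ ¬ inD 0 n pu i))

/-- Dual Knuth move of the first kind of index `k` from `u` to `t`,
on standard tableaux of shape `lam`:  `t = s_k u` with
`D(u) ∩ {k-1,k} = {k-1}` and `D(t) ∩ {k-1,k} = {k}`. -/
def DK1 (lam : ℕ → ℕ) (n : ℕ) (pu pt : ℕ → ℕ × ℕ) (k : ℕ) : Prop :=
  IsStd lam n pu ∧ IsStd lam n pt ∧ 2 ≤ k ∧
  (∀ m, pt m = pu (Equiv.swap k (k+1) m)) ∧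
  inD 0 n pu (k-1) ∧ ¬ inD 0 n pu k ∧ inD 0 n pt k ∧ ¬ inD 0 n pt (k-1)

/-- Dual Knuth move of the second kind of index `k` from `u` to `t`:
`t = s_k u` with `D(u) ∩ {k,k+1} = {k+1}` and `D(t) ∩ {k,k+1} = {k}`. -/
def DK2 (lam : ℕ → ℕ) (n : ℕ) (pu pt : ℕ → ℕ × ℕ) (k : ℕ) : Prop :=
  IsStd lam n pu ∧ IsStd lam n pt ∧ k + 2 ≤ n ∧
  (∀ m, pt m = pu (Equiv.swap k (k+1) m)) ∧
  inD 0 n pu (k+1) ∧ ¬ inD 0 n pu k ∧ inD 0 n pt k ∧ ¬ inD 0 n pt (k+1)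

/-- A dual Knuth move (of either kind) of index `k` from `u` to `t`. -/
def DKMove (lam : ℕ → ℕ) (n : ℕ) (pu pt : ℕ → ℕ × ℕ) (k : ℕ) : Prop :=
  DK1 lam n pu pt k ∨ DK2 lam n pu pt k

/-- A paired dual Knuth move: a dual Knuth move of the same kind and the same
index applied simultaneously to both components of a pair. -/
def PairedDKMove (mu lam : ℕ → ℕ) (n : ℕ)
    (a b : (ℕ → ℕ × ℕ) × (ℕ → ℕ × ℕ)) : Prop :=
  ∃ k, (DK1 mu n a.1 b.1 k ∧ DK1 lam n a.2 b.2 k) ∨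
       (DK2 mu n a.1 b.1 k ∧ DK2 lam n a.2 b.2 k)

/-- Paired dual Knuth equivalence: the equivalence relation generated by
paired dual Knuth moves. -/
def PairedDKEquiv (mu lam : ℕ → ℕ) (n : ℕ)
    (a b : (ℕ → ℕ × ℕ) × (ℕ → ℕ × ℕ)) : Prop :=
  Relation.ReflTransGen
    (fun x y => PairedDKMove mu lam n x y ∨ PairedDKMove mu lam n y x) a b

/-- Lexicographic order on same-shape column standard tableaux: `u <_lex t`. -/
def LexLT (n : ℕ) (pu pt : ℕ → ℕ × ℕ) : Prop :=
  ∃ l, 1 ≤ l ∧ l ≤ n ∧ colT pt l < colT pu l ∧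
    ∀ m, l < m → m ≤ n → colT pt m = colT pu m

/-- `w` is a permutation of `[1,n]`, fixing all other natural numbers. -/
def IsPermOf (n : ℕ) (w : ℕ → ℕ) : Prop :=
  (∀ k ∈ Finset.Icc 1 n, w k ∈ Finset.Icc 1 n) ∧
  (∀ k ∈ Finset.Icc 1 n, ∀ l ∈ Finset.Icc 1 n, w k = w l → k = l) ∧
  (∀ k, k ∉ Finset.Icc 1 n → w k = k)

/-- The Coxeter length of `w ∈ S_n`: the number of inversions. -/
def lenInv (n : ℕ) (w : ℕ → ℕ) : ℕ :=
  ((Finset.Icc 1 n ×ˢ Finset.Icc 1 n).filter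
    (fun q => q.1 < q.2 ∧ w q.2 < w q.1)).card

/-- One step of the Bruhat order on `S_n`: `y = (i j) ∘ x` (so `y x⁻¹` is a
reflection) with `l(x) < l(y)`. -/
def BruhatStep (n : ℕ) (x y : ℕ → ℕ) : Prop :=
  lenInv n x < lenInv n y ∧
  ∃ i j, 1 ≤ i ∧ i < j ∧ j ≤ n ∧ ∀ k, y k = Equiv.swap i j (x k)

/-- The Bruhat order on `S_n`. -/
def BruhatLe (n : ℕ) (x y : ℕ → ℕ) : Prop :=
  Relation.ReflTransGen (BruhatStep n) x y

/-- One step of the left weak order on `S_n`: `y = s_i ∘ x` with `l(x) < l(y)`. -/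
def WeakStep (n : ℕ) (x y : ℕ → ℕ) : Prop :=
  lenInv n x < lenInv n y ∧
  ∃ i, 1 ≤ i ∧ i + 1 ≤ n ∧ ∀ k, y k = Equiv.swap i (i+1) (x k)

/-- The left weak order on `S_n`. -/
def WeakLe (n : ℕ) (x y : ℕ → ℕ) : Prop :=
  Relation.ReflTransGen (WeakStep n) x y

/-- `ptau` is (the position function of) the column superstandard tableau
`τ_lam`: column standard, with the columns filled in order from left to right. -/
def IsSuperstandard (lam : ℕ → ℕ) (n : ℕ) (ptau : ℕ → ℕ × ℕ) : Prop :=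
  IsTab lam n ptau ∧ ColStd 0 n ptau ∧
  ∀ k, 1 ≤ k → k + 1 ≤ n → colT ptau k ≤ colT ptau (k+1)

/-- `w = perm(t)`, i.e. `w · τ_lam = t`: for each `k`, the box of `τ_lam`
containing `k` contains `w k` in `t`. -/
def IsPermTab (n : ℕ) (ptau pt : ℕ → ℕ × ℕ) (w : ℕ → ℕ) : Prop :=
  IsPermOf n w ∧ ∀ k ∈ Finset.Icc 1 n, pt (w k) = ptau k

/-- `p` (a standard skew tableau of shape `lam/mu` with entries `a+1, …, a+n`)
is the `(a+1)`-critical tableau: writing `m = a+1`, the entry `m` lies in the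
first nonempty column `i` of the skew diagram, `m+1` lies in column `i+1`,
and the restriction to entries `> m+1` is minimal (no strong descents). -/
def IsCritical (lam mu : ℕ → ℕ) (a n : ℕ) (p : ℕ → ℕ × ℕ) : Prop :=
  IsStdSkew lam mu a n p ∧
  (∀ j, 1 ≤ j → j < colT p (a+1) → lam j ≤ mu j) ∧
  mu (colT p (a+1)) < lam (colT p (a+1)) ∧
  colT p (a+2) = colT p (a+1) + 1 ∧
  ∀ i, a + 3 ≤ i → i + 1 ≤ a + n → colT p i ≤ colT p (i+1)

/-- The box `c` is removable from the diagram of `lam`. -/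
def Removable (lam : ℕ → ℕ) (c : ℕ × ℕ) : Prop :=
  1 ≤ c.2 ∧ c.1 = lam c.2 ∧ lam (c.2 + 1) < c.1

/-- One step of a jeu de taquin slide on a filling `p` with entries `1, …, n`:
the hole moves from `b` to `b'`, where `b'` is the box (below or to the right
of `b`) containing the smaller entry `x` among the occupied candidates, and the
filling is updated by moving `x` into `b`. -/
def SlideStep (n : ℕ) (p : ℕ → ℕ × ℕ) (b : ℕ × ℕ)
    (p' : ℕ → ℕ × ℕ) (b' : ℕ × ℕ) : Prop :=
  ∃ x, 1 ≤ x ∧ x ≤ n ∧ p x = b' ∧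
    (b' = (b.1 + 1, b.2) ∨ b' = (b.1, b.2 + 1)) ∧
    (∀ y, 1 ≤ y → y ≤ n → (p y = (b.1 + 1, b.2) ∨ p y = (b.1, b.2 + 1)) → x ≤ y) ∧
    (∀ y, p' y = if y = x then b else p y)

/-- `lam/mu` is a skew partition of `n`. -/
def IsSkewShape (n : ℕ) (lam mu : ℕ → ℕ) : Prop :=
  (∃ m, IsPartition (m + n) lam ∧ IsPartition m mu) ∧ ∀ j, mu j ≤ lam j

/-!
Since `u` and `t` agree on the entries `≤ i`, their shapes after adding `i + 1` differ only
in where that one box goes. Dominance at the column `c` of `i + 1` in `t` then forces `i + 1`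
to lie in a column `≤ c` of `u`. If the columns were equal, column standardness would put
`i + 1` in the same row of both tableaux (one below the entries `≤ i` of that column), so
`u` and `t` would agree on `i + 1` as well.
-/

lemma resShape_succ (p : ℕ → ℕ × ℕ) (m j : ℕ) :
    resShape p (m + 1) j = resShape p m j + if colT p (m + 1) = j then 1 else 0 := by
  unfold resShape
  rw [← Finset.insert_Icc_right_eq_Icc_add_one (by omega), Finset.filter_insert]
  split_ifs
  · rw [Finset.card_insert_of_notMem (by simp)]
  · rfl

lemma psum_resShape_succ (p : ℕ → ℕ × ℕ) (m k : ℕ) :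
    psum (fun j => resShape p (m + 1) j) k =
      psum (fun j => resShape p m j) k + if colT p (m + 1) ∈ Finset.Icc 1 k then 1 else 0 := by
  simp only [psum, resShape_succ, Finset.sum_add_distrib, Finset.sum_ite_eq]

lemma resShape_congr {p q : ℕ → ℕ × ℕ} {m : ℕ}
    (hagree : ∀ k, 1 ≤ k → k ≤ m → p k = q k) (j : ℕ) :
    resShape p m j = resShape q m j := by
  unfold resShape colT
  congr 1
  refine Finset.filter_congr fun k hk => ?_
  rw [Finset.mem_Icc] at hk
  rw [hagree k hk.1 hk.2]

lemma colT_le_of_dominates_succ {p q : ℕ → ℕ × ℕ} {m : ℕ}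
    (hshape : ∀ j, resShape p m j = resShape q m j) (hq : 1 ≤ colT q (m + 1))
    (hdom : Dominates (fun j => resShape q (m + 1) j) (fun j => resShape p (m + 1) j)) :
    colT p (m + 1) ≤ colT q (m + 1) := by
  have h := hdom (colT q (m + 1))
  rw [psum_resShape_succ, psum_resShape_succ, if_pos (Finset.mem_Icc.2 ⟨hq, le_rfl⟩)] at h
  simp only [psum, hshape] at h
  by_contra hlt
  rw [if_neg (by simp only [Finset.mem_Icc]; omega)] at h
  omega

section IsColStdTab

variable {lam : ℕ → ℕ} {n : ℕ} {p : ℕ → ℕ × ℕ}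

lemma IsColStdTab.le_iff_rowT_le (h : IsColStdTab lam n p) {k l : ℕ}
    (hk : k ∈ Finset.Icc 1 n) (hl : l ∈ Finset.Icc 1 n) (hc : colT p l = colT p k) :
    l ≤ k ↔ rowT p l ≤ rowT p k := by
  obtain ⟨⟨-, hinj, -⟩, hcs⟩ := h
  simp only [ColStd, zero_add] at hinj hcs
  constructor
  · intro hlk
    by_contra hrow
    have := hcs k hk l hl hc.symm (by omega)
    omega
  · intro hrow
    rcases hrow.lt_or_eq with hlt | heq
    · exact (hcs l hl k hk hc hlt).le
    · exact (hinj l hl k hk (Prod.ext heq hc)).le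

lemma IsColStdTab.rowT_eq_resShape (h : IsColStdTab lam n p) {k : ℕ}
    (hk : k ∈ Finset.Icc 1 n) : rowT p k = resShape p k (colT p k) := by
  have hbox := h.1.1
  have hinj := h.1.2.1
  have hsurj := h.1.2.2
  simp only [zero_add] at hbox hinj hsurj
  have hmem : ∀ {l}, l ∈ (Finset.Icc 1 k).filter (fun l => colT p l = colT p k) →
      l ∈ Finset.Icc 1 n ∧ l ≤ k ∧ colT p l = colT p k := by
    intro l hl
    simp only [Finset.mem_filter, Finset.mem_Icc] at hl hk ⊢
    exact ⟨⟨hl.1.1, hl.1.2.trans hk.2⟩, hl.1.2, hl.2⟩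
  obtain ⟨hcol_pos, -, hrow_le⟩ := hbox k hk
  trans (Finset.Icc 1 (rowT p k)).card
  · simp
  symm
  refine Finset.card_bij (fun l _ => rowT p l) (fun l hl => ?_) (fun l hl l' hl' hrow => ?_)
    (fun r hr => ?_)
  · obtain ⟨hl, hlk, hc⟩ := hmem hl
    exact Finset.mem_Icc.2 ⟨(hbox l hl).2.1, (h.le_iff_rowT_le hk hl hc).1 hlk⟩
  · obtain ⟨hl, -, hc⟩ := hmem hl
    obtain ⟨hl', -, hc'⟩ := hmem hl'
    exact hinj l hl l' hl' (Prod.ext hrow (hc.trans hc'.symm))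
  · rw [Finset.mem_Icc] at hr
    obtain ⟨l, hl, hpl⟩ := hsurj (r, colT p k) hcol_pos (by simp only; omega) (hr.2.trans hrow_le)
    have hc : colT p l = colT p k := by rw [colT, hpl]
    have hlk := (h.le_iff_rowT_le hk hl hc).2 (by rw [rowT, hpl]; exact hr.2)
    refine ⟨l, Finset.mem_filter.2 ⟨Finset.mem_Icc.2 ⟨(Finset.mem_Icc.1 hl).1, hlk⟩, hc⟩, ?_⟩
    rw [rowT, hpl]

end IsColStdTab

lemma IsColStdTab.eq_of_resShape_eq_of_colT_eq {lam mu : ℕ → ℕ} {n m : ℕ}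
    {p q : ℕ → ℕ × ℕ} (hp : IsColStdTab lam n p) (hq : IsColStdTab mu n q) (hm : m + 1 ≤ n)
    (hshape : ∀ j, resShape p m j = resShape q m j) (hcol : colT p (m + 1) = colT q (m + 1)) :
    p (m + 1) = q (m + 1) := by
  have hmem : m + 1 ∈ Finset.Icc 1 n := Finset.mem_Icc.2 ⟨by omega, hm⟩
  have hrow : rowT p (m + 1) = rowT q (m + 1) := by
    rw [hp.rowT_eq_resShape hmem, hq.rowT_eq_resShape hmem, resShape_succ, resShape_succ,
      hcol, hshape]
  exact Prod.ext hrow hcol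

theorem dominance_col_of_first_disagreement_general (n : ℕ) (lam : ℕ → ℕ)
    (pu pt : ℕ → ℕ × ℕ)
    (hu : IsColStdTab lam n pu) (ht : IsColStdTab lam n pt)
    (i : ℕ) (hin : i + 1 ≤ n)
    (hagree : ∀ k, 1 ≤ k → k ≤ i → pu k = pt k)
    (hne : pu (i+1) ≠ pt (i+1))
    (hdom : ∀ m ∈ Finset.Icc 1 n,
      Dominates (fun j => resShape pt m j) (fun j => resShape pu m j)) :
    colT pu (i+1) < colT pt (i+1) := by
  have hshape : ∀ j, resShape pu i j = resShape pt i j := resShape_congr hagree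
  have hcol_pos : 1 ≤ colT pt (i + 1) := (ht.1.1 (i + 1) (by simp; omega)).1
  have hle := colT_le_of_dominates_succ hshape hcol_pos (hdom (i + 1) (by simp; omega))
  exact lt_of_le_of_ne hle fun hcol => hne (hu.eq_of_resShape_eq_of_colT_eq ht hin hshape hcol)

/-- if `t` dominates `u` then the entry after the last agreement
sits in a strictly smaller column of `u` than of `t`. -/
theorem dominance_col_of_first_disagreement (n : ℕ) (lam : ℕ → ℕ)
    (hlam : IsComp n lam) (pu pt : ℕ → ℕ × ℕ)
    (hu : IsColStdTab lam n pu) (ht : IsColStdTab lam n pt)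
    (i : ℕ) (hin : i + 1 ≤ n)
    (hagree : ∀ k, 1 ≤ k → k ≤ i → pu k = pt k)
    (hne : pu (i+1) ≠ pt (i+1))
    (hdom : ∀ m ∈ Finset.Icc 1 n,
      Dominates (fun j => resShape pt m j) (fun j => resShape pu m j)) :
    colT pu (i+1) < colT pt (i+1) :=
  dominance_col_of_first_disagreement_general n lam pu pt hu ht i hin hagree hne hdom
end

section
/- Let λ be a composition of n and u, t column standard λ-tableaux. If perm(t) ≥ perm(u) in the Bruhat order on the symmetric group S_n, then t ≥_lex u, where t >_lex u means there exists l ∈ [1,n] with col_t(l) < col_u(l) and col_t(i) = col_u(i) for all i ∈ [l+1, n]. -/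
open Finset

namespace IsPermOf

variable {n : ℕ} {x : ℕ → ℕ}

theorem injective (hx : IsPermOf n x) : Function.Injective x := by
  obtain ⟨hmaps, hinj, hfix⟩ := hx
  intro k l hkl
  by_cases hk : k ∈ Icc 1 n <;> by_cases hl : l ∈ Icc 1 n
  · exact hinj k hk l hl hkl
  · exact absurd (by rw [← hfix l hl, ← hkl]; exact hmaps k hk) hl
  · exact absurd (by rw [← hfix k hk, hkl]; exact hmaps l hl) hk
  · rwa [hfix k hk, hfix l hl] at hkl

theorem exists_eq (hx : IsPermOf n x) {i : ℕ} (hi : i ∈ Icc 1 n) : ∃ a ∈ Icc 1 n, x a = i := by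
  obtain ⟨a, ha, hxa⟩ := surj_on_of_inj_on_of_card_le (fun a _ => x a) (fun a ha => hx.1 a ha)
    (fun a b ha hb h => hx.2.1 a ha b hb h) le_rfl i hi
  exact ⟨a, ha, hxa.symm⟩

theorem comp_swap (hx : IsPermOf n x) {a b : ℕ} (ha : a ∈ Icc 1 n) (hb : b ∈ Icc 1 n) :
    IsPermOf n (x ∘ Equiv.swap a b) := by
  have hmem : ∀ k ∈ Icc 1 n, Equiv.swap a b k ∈ Icc 1 n := fun k hk => by
    rw [Equiv.swap_apply_def]; split_ifs <;> assumption
  refine ⟨fun k hk => hx.1 _ (hmem k hk),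
    fun k _ l _ h => (Equiv.swap a b).injective (hx.injective h), fun k hk => ?_⟩
  rw [Function.comp_apply, Equiv.swap_apply_of_ne_of_ne (ne_of_mem_of_not_mem ha hk).symm
    (ne_of_mem_of_not_mem hb hk).symm, hx.2.2 k hk]

end IsPermOf

theorem lenInv_le_lenInv_comp_swap {n a b : ℕ} {x : ℕ → ℕ} (ha : a ∈ Icc 1 n)
    (hb : b ∈ Icc 1 n) (hab : a < b) (hxab : x a < x b) :
    lenInv n x ≤ lenInv n (x ∘ Equiv.swap a b) := by
  set s := Equiv.swap a b
  -- Map an inversion `(p, q)` to `(s p, s q)` unless `s` reverses the order of `p < q`.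
  refine card_le_card_of_injOn (fun q => if s q.1 < s q.2 then (s q.1, s q.2) else q) ?_ ?_
  · rintro ⟨p, q⟩ hpq
    simp only [mem_coe, mem_filter, mem_product, mem_Icc] at hpq ha hb
    simp only [mem_coe, mem_filter, mem_product, mem_Icc, Function.comp_apply]
    split_ifs with hs
    · simp only [s, Equiv.swap_apply_self]
      refine ⟨⟨?_, ?_⟩, hs, hpq.2.2⟩ <;> simp only [Equiv.swap_apply_def] <;> split_ifs <;> omega
    · refine ⟨hpq.1, hpq.2.1, ?_⟩
      simp only [s, Equiv.swap_apply_def] at hs ⊢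
      split_ifs at hs ⊢ <;> subst_vars <;> omega
  · rintro ⟨p, q⟩ hpq ⟨p', q'⟩ hpq' h
    simp only [mem_coe, mem_filter, mem_product, mem_Icc] at hpq hpq'
    simp only at h
    split_ifs at h with hs hs' hs'
    · simp only [Prod.mk.injEq, s.injective.eq_iff] at h; rw [h.1, h.2]
    · simp only [Prod.mk.injEq] at h
      rw [← h.1, ← h.2, Equiv.swap_apply_self, Equiv.swap_apply_self] at hs'
      omega
    · simp only [Prod.mk.injEq] at h
      rw [h.1, h.2, Equiv.swap_apply_self, Equiv.swap_apply_self] at hs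
      omega
    · exact h

-- Ehresmann's criterion: `x ≤ y` in the Bruhat order iff `rankMatrix y ≤ rankMatrix x` entrywise.
def rankMatrix (w : ℕ → ℕ) (P m : ℕ) : ℕ := #{k ∈ Icc 1 P | w k ≤ m}

theorem rankMatrix_comp_swap_le {a b : ℕ} {x : ℕ → ℕ} (ha : 1 ≤ a) (hab : a < b)
    (hxab : x a < x b) (P m : ℕ) : rankMatrix (x ∘ Equiv.swap a b) P m ≤ rankMatrix x P m := by
  unfold rankMatrix
  rw [card_filter, card_filter]
  by_cases hbP : b ≤ P
  · refine le_of_eq (sum_equiv (Equiv.swap a b) (fun k => ?_) fun k _ => rfl)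
    simp only [mem_Icc, Equiv.swap_apply_def]
    split_ifs <;> omega
  · refine sum_le_sum fun k hk => ?_
    rw [mem_Icc] at hk
    rcases eq_or_ne k a with rfl | hka
    · simp only [Function.comp_apply, Equiv.swap_apply_left]
      split_ifs <;> omega
    · rw [Function.comp_apply, Equiv.swap_apply_of_ne_of_ne hka (by omega)]

theorem BruhatStep.exists_comp_swap {n : ℕ} {x y : ℕ → ℕ} (hx : IsPermOf n x)
    (h : BruhatStep n x y) : ∃ a ∈ Icc 1 n, ∃ b ∈ Icc 1 n, a < b ∧ x a < x b ∧
      y = x ∘ Equiv.swap a b := by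
  obtain ⟨hlen, i, j, hi, hij, hjn, hy⟩ := h
  obtain ⟨a, ha, rfl⟩ := hx.exists_eq (mem_Icc.2 ⟨hi, by omega⟩)
  obtain ⟨b, hb, rfl⟩ := hx.exists_eq (mem_Icc.2 ⟨by omega, hjn⟩)
  have hyx : y = x ∘ Equiv.swap a b := funext fun k => by
    rw [hy, Function.comp_apply, hx.injective.map_swap]
  refine ⟨a, ha, b, hb, ?_, hij, hyx⟩
  by_contra! hba
  have hxy : x = y ∘ Equiv.swap b a := by ext k; simp [hyx, Equiv.swap_comm]
  have := lenInv_le_lenInv_comp_swap (x := y) hb ha (hba.lt_of_ne (by rintro rfl; omega))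
    (by simpa [hyx] using hij)
  rw [← hxy] at this
  omega

theorem BruhatLe.rankMatrix_le {n : ℕ} {x y : ℕ → ℕ} (hx : IsPermOf n x) (h : BruhatLe n x y)
    (P m : ℕ) : rankMatrix y P m ≤ rankMatrix x P m := by
  suffices IsPermOf n y ∧ ∀ P m, rankMatrix y P m ≤ rankMatrix x P m from this.2 P m
  induction h with
  | refl => exact ⟨hx, fun _ _ => le_rfl⟩
  | tail _ hstep ih =>
    obtain ⟨a, ha, b, hb, hab, hxab, rfl⟩ := hstep.exists_comp_swap ih.1
    exact ⟨ih.1.comp_swap ha hb, fun P m =>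
      (rankMatrix_comp_swap_le (mem_Icc.1 ha).1 hab hxab P m).trans (ih.2 P m)⟩

def colCount (p : ℕ → ℕ × ℕ) (m j : ℕ) : ℕ := #{k ∈ Icc 1 m | colT p k ≤ j}

theorem colCount_succ (p : ℕ → ℕ × ℕ) (m j : ℕ) :
    colCount p (m + 1) j = colCount p m j + if colT p (m + 1) ≤ j then 1 else 0 := by
  simp only [colCount, card_filter]
  exact sum_Icc_succ_top (by omega) _

theorem colCount_add_card_Ioc (p : ℕ → ℕ × ℕ) {l m : ℕ} (hlm : l ≤ m) (j : ℕ) :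
    colCount p l j + #{k ∈ Ioc l m | colT p k ≤ j} = colCount p m j := by
  have hIcc (k : ℕ) : Icc 1 k = Ioc 0 k := Icc_add_one_left_eq_Ioc 0 k
  simp only [colCount, card_filter, hIcc]
  exact sum_Ioc_consecutive _ (Nat.zero_le l) hlm

theorem psum_resShape {p : ℕ → ℕ × ℕ} {m : ℕ} (hp : ∀ k ∈ Icc 1 m, 1 ≤ colT p k) (j : ℕ) :
    psum (resShape p m) j = colCount p m j := by
  rw [colCount, card_eq_sum_card_fiberwise (f := colT p) (t := Icc 1 j)]
  · refine sum_congr rfl fun i hi => ?_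
    rw [resShape, filter_filter]
    exact congrArg card (filter_congr fun k _ => by grind)
  · intro k hk
    rw [mem_coe, mem_filter, mem_Icc] at hk
    rw [mem_coe, mem_Icc]
    exact ⟨hp k (mem_Icc.2 hk.1), hk.2⟩

namespace IsTab

variable {lam : ℕ → ℕ} {n : ℕ} {p : ℕ → ℕ × ℕ}

theorem one_le_colT (hp : IsTab lam n p) {k : ℕ} (hk : k ∈ Icc 1 n) : 1 ≤ colT p k :=
  (hp.1 k (by simpa using hk)).1

theorem rowT_le (hp : IsTab lam n p) {k : ℕ} (hk : k ∈ Icc 1 n) : rowT p k ≤ lam (colT p k) :=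
  (hp.1 k (by simpa using hk)).2.2

theorem card_colT_eq_rowT_le (hp : IsTab lam n p) {c r : ℕ} (hc : 1 ≤ c) (hr : r ≤ lam c) :
    #{k ∈ Icc 1 n | colT p k = c ∧ rowT p k ≤ r} = r := by
  obtain ⟨hbox, hinj, hsurj⟩ := hp
  simp only [zero_add] at hbox hinj hsurj
  refine (card_nbij (t := Icc 1 r) (rowT p) (fun k hk => ?_) (fun k hk l hl h => ?_)
    fun r' hr' => ?_).trans (Nat.card_Icc 1 r)
  · rw [mem_coe, mem_filter] at hk
    exact mem_Icc.2 ⟨(hbox k hk.1).2.1, hk.2.2⟩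
  · rw [mem_coe, mem_filter] at hk hl
    exact hinj k hk.1 l hl.1 (Prod.ext h (hk.2.1.trans hl.2.1.symm))
  · rw [mem_coe, mem_Icc] at hr'
    obtain ⟨k, hk, hpk⟩ := hsurj (r', c) hc hr'.1 (hr'.2.trans hr)
    refine ⟨k, ?_, congrArg Prod.fst hpk⟩
    rw [mem_coe, mem_filter, colT, rowT, hpk]
    exact ⟨hk, rfl, hr'.2⟩

theorem resShape_eq (hp : IsTab lam n p) {c : ℕ} (hc : 1 ≤ c) : resShape p n c = lam c := by
  rw [← hp.card_colT_eq_rowT_le hc le_rfl, resShape]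
  exact congrArg card (filter_congr fun k hk =>
    ⟨fun h => ⟨h, h ▸ hp.rowT_le hk⟩, And.left⟩)

theorem colCount_eq_psum (hp : IsTab lam n p) (j : ℕ) : colCount p n j = psum lam j := by
  rw [← psum_resShape fun k => hp.one_le_colT]
  exact sum_congr rfl fun c hc => hp.resShape_eq (mem_Icc.1 hc).1

end IsTab

theorem IsColStdTab.rowT_eq_card {lam : ℕ → ℕ} {n : ℕ} {p : ℕ → ℕ × ℕ}
    (hp : IsColStdTab lam n p) {k : ℕ} (hk : k ∈ Icc 1 n) :
    rowT p k = #{l ∈ Icc 1 n | colT p l = colT p k ∧ l ≤ k} := by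
  obtain ⟨htab, hstd⟩ := hp
  simp only [ColStd, zero_add] at hstd
  rw [← htab.card_colT_eq_rowT_le (htab.one_le_colT hk) (htab.rowT_le hk)]
  refine congrArg card (filter_congr fun l hl => and_congr_right fun hcol => ?_)
  constructor
  · intro hrow
    rcases hrow.lt_or_eq with hlt | heq
    · exact (hstd l hl k hk hcol hlt).le
    · exact (htab.2.1 l (by simpa using hl) k (by simpa using hk) (Prod.ext heq hcol)).le
  · intro hlk
    by_contra! hlt
    exact absurd (hstd k hk l hl hcol.symm hlt) (by omega)

theorem IsColStdTab.eq_of_colT_eq {lam mu : ℕ → ℕ} {n : ℕ} {pu pt : ℕ → ℕ × ℕ}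
    (hu : IsColStdTab lam n pu) (ht : IsColStdTab mu n pt)
    (hcol : ∀ k ∈ Icc 1 n, colT pt k = colT pu k) (k : ℕ) (hk : k ∈ Icc 1 n) : pt k = pu k := by
  refine Prod.ext ?_ (hcol k hk)
  change rowT pt k = rowT pu k
  rw [ht.rowT_eq_card hk, hu.rowT_eq_card hk]
  exact congrArg card (filter_congr fun l hl => by rw [hcol l hl, hcol k hk])

theorem IsSuperstandard.colT_mono {lam : ℕ → ℕ} {n : ℕ} {ptau : ℕ → ℕ × ℕ}
    (h : IsSuperstandard lam n ptau) {k l : ℕ} (hk : 1 ≤ k) (hkl : k ≤ l) (hln : l ≤ n) :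
    colT ptau k ≤ colT ptau l := by
  induction l, hkl using Nat.le_induction with
  | base => exact le_rfl
  | succ m hkm ih => exact (ih (by omega)).trans (h.2.2 m (by omega) (by omega))

theorem IsSuperstandard.colT_le_iff {lam : ℕ → ℕ} {n : ℕ} {ptau : ℕ → ℕ × ℕ}
    (h : IsSuperstandard lam n ptau) {k : ℕ} (hk : k ∈ Icc 1 n) (j : ℕ) :
    colT ptau k ≤ j ↔ k ≤ psum lam j := by
  rw [← h.1.colCount_eq_psum, colCount]
  rw [mem_Icc] at hk
  constructor
  · intro hkj
    have hsub : Icc 1 k ⊆ {l ∈ Icc 1 n | colT ptau l ≤ j} := fun l hl => by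
      rw [mem_Icc] at hl
      exact mem_filter.2 ⟨mem_Icc.2 ⟨hl.1, by omega⟩, (h.colT_mono hl.1 hl.2 hk.2).trans hkj⟩
    simpa using card_le_card hsub
  · intro hkj
    by_contra! hjk
    have hsub : {l ∈ Icc 1 n | colT ptau l ≤ j} ⊆ Icc 1 (k - 1) := fun l hl => by
      rw [mem_filter, mem_Icc] at hl
      refine mem_Icc.2 ⟨hl.1.1, ?_⟩
      by_contra! hkl
      exact absurd ((h.colT_mono hk.1 (by omega) hl.1.2).trans hl.2) (by omega)
    have := card_le_card hsub
    simp only [Nat.card_Icc] at this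
    omega

theorem IsPermTab.colCount_eq_rankMatrix {lam : ℕ → ℕ} {n : ℕ} {ptau p : ℕ → ℕ × ℕ}
    {w : ℕ → ℕ} (htau : IsSuperstandard lam n ptau) (hw : IsPermTab n ptau p w) {m : ℕ}
    (hm : m ≤ n) (j : ℕ) : colCount p m j = rankMatrix w (psum lam j) m := by
  obtain ⟨hperm, hpos⟩ := hw
  have hcol : ∀ k ∈ Icc 1 n, colT p (w k) = colT ptau k := fun k hk => by
    rw [colT, colT, hpos k hk]
  have hP : psum lam j ≤ n := by
    simpa [← htau.1.colCount_eq_psum, colCount] using card_filter_le (Icc 1 n) _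
  refine (card_nbij w (fun k hk => ?_) hperm.injective.injOn fun x hx => ?_).symm
  · rw [mem_coe, mem_filter, mem_Icc] at hk
    have hkn : k ∈ Icc 1 n := mem_Icc.2 ⟨hk.1.1, hk.1.2.trans hP⟩
    rw [mem_coe, mem_filter, mem_Icc, hcol k hkn, htau.colT_le_iff hkn]
    exact ⟨⟨(mem_Icc.1 (hperm.1 k hkn)).1, hk.2⟩, hk.1.2⟩
  · rw [mem_coe, mem_filter, mem_Icc] at hx
    obtain ⟨k, hkn, rfl⟩ := hperm.exists_eq (mem_Icc.2 ⟨hx.1.1, hx.1.2.trans hm⟩)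
    rw [hcol k hkn, htau.colT_le_iff hkn] at hx
    exact ⟨k, mem_filter.2 ⟨mem_Icc.2 ⟨(mem_Icc.1 hkn).1, hx.2⟩, hx.1.2⟩, rfl⟩

theorem extDomLe_iff_colCount_le {lam mu : ℕ → ℕ} {n : ℕ} {pu pt : ℕ → ℕ × ℕ}
    (hu : IsTab lam n pu) (ht : IsTab mu n pt) :
    ExtDomLe n pu pt ↔ ∀ m ≤ n, ∀ j, colCount pt m j ≤ colCount pu m j := by
  have hres : ∀ {ν p}, IsTab ν n p → ∀ m ∈ Icc 1 n, ∀ j,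
      psum (resShape p m) j = colCount p m j := fun hp m hm =>
    psum_resShape fun k hk => hp.one_le_colT (mem_Icc.2 ⟨(mem_Icc.1 hk).1,
      (mem_Icc.1 hk).2.trans (mem_Icc.1 hm).2⟩)
  constructor
  · intro h m hmn j
    rcases Nat.eq_zero_or_pos m with rfl | hm
    · simp [colCount]
    · have hm : m ∈ Icc 1 n := mem_Icc.2 ⟨hm, hmn⟩
      simpa [hres hu m hm, hres ht m hm] using h m hm j
  · intro h m hm j
    simpa [hres hu m hm, hres ht m hm] using h m (mem_Icc.1 hm).2 j

theorem extDomLe_of_bruhatLe {lam : ℕ → ℕ} {n : ℕ} {pu pt ptau : ℕ → ℕ × ℕ} {wu wt : ℕ → ℕ}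
    (htau : IsSuperstandard lam n ptau) (hu : IsTab lam n pu) (ht : IsTab lam n pt)
    (hwu : IsPermTab n ptau pu wu) (hwt : IsPermTab n ptau pt wt) (hbr : BruhatLe n wu wt) :
    ExtDomLe n pu pt := by
  refine (extDomLe_iff_colCount_le hu ht).2 fun m hm j => ?_
  rw [hwt.colCount_eq_rankMatrix htau hm, hwu.colCount_eq_rankMatrix htau hm]
  exact hbr.rankMatrix_le hwu.1 _ _

theorem lexLT_of_extDomLe {lam : ℕ → ℕ} {n : ℕ} {pu pt : ℕ → ℕ × ℕ}
    (hu : IsTab lam n pu) (ht : IsTab lam n pt) (hdom : ExtDomLe n pu pt)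
    (hne : ∃ k ∈ Icc 1 n, colT pt k ≠ colT pu k) : LexLT n pu pt := by
  obtain ⟨l, hl, hmax⟩ := exists_max_image {k ∈ Icc 1 n | colT pt k ≠ colT pu k} id
    (by simpa [Finset.Nonempty] using hne)
  rw [mem_filter, mem_Icc] at hl
  have htail : ∀ m, l < m → m ≤ n → colT pt m = colT pu m := fun m hlm hmn => by
    by_contra hne
    exact absurd (hmax m (mem_filter.2 ⟨mem_Icc.2 ⟨by omega, hmn⟩, hne⟩)) (by simpa using hlm)
  refine ⟨l, hl.1.1, hl.1.2, ?_, htail⟩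
  by_contra! hge
  obtain ⟨i, rfl⟩ : ∃ i, l = i + 1 := ⟨l - 1, by omega⟩
  set j := colT pu (i + 1)
  -- Both the shapes and the columns of the entries after `i + 1` agree.
  have hcount : colCount pt (i + 1) j = colCount pu (i + 1) j := by
    have htot := ht.colCount_eq_psum j
    rw [← hu.colCount_eq_psum j, ← colCount_add_card_Ioc pt hl.1.2,
      ← colCount_add_card_Ioc pu hl.1.2] at htot
    have htails : #{k ∈ Ioc (i + 1) n | colT pt k ≤ j} = #{k ∈ Ioc (i + 1) n | colT pu k ≤ j} :=
      congrArg card (filter_congr fun k hk => by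
        rw [htail k (mem_Ioc.1 hk).1 (mem_Ioc.1 hk).2])
    omega
  rw [colCount_succ, colCount_succ, if_neg (by omega), if_pos le_rfl] at hcount
  have := (extDomLe_iff_colCount_le hu ht).1 hdom i (by omega) j
  omega

theorem bruhat_implies_lex_general (n : ℕ) (lam : ℕ → ℕ)
    (pu pt ptau : ℕ → ℕ × ℕ)
    (hu : IsColStdTab lam n pu) (ht : IsColStdTab lam n pt)
    (htau : IsSuperstandard lam n ptau)
    (wu wt : ℕ → ℕ)
    (hwu : IsPermTab n ptau pu wu) (hwt : IsPermTab n ptau pt wt)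
    (hbr : BruhatLe n wu wt) :
    (∀ k ∈ Finset.Icc 1 n, pt k = pu k) ∨
      ∃ l, 1 ≤ l ∧ l ≤ n ∧ colT pt l < colT pu l ∧
        ∀ m, l < m → m ≤ n → colT pt m = colT pu m := by
  by_cases hcol : ∀ k ∈ Icc 1 n, colT pt k = colT pu k
  · exact Or.inl (hu.eq_of_colT_eq ht hcol)
  · push Not at hcol
    exact Or.inr <| lexLT_of_extDomLe hu.1 ht.1
      (extDomLe_of_bruhatLe htau hu.1 ht.1 hwu hwt hbr) hcol

/-- Bruhat comparability implies lexicographic comparability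
for column standard tableaux of the same composition shape. -/
theorem bruhat_implies_lex (n : ℕ) (lam : ℕ → ℕ) (hlam : IsComp n lam)
    (pu pt ptau : ℕ → ℕ × ℕ)
    (hu : IsColStdTab lam n pu) (ht : IsColStdTab lam n pt)
    (htau : IsSuperstandard lam n ptau)
    (wu wt : ℕ → ℕ)
    (hwu : IsPermTab n ptau pu wu) (hwt : IsPermTab n ptau pt wt)
    (hbr : BruhatLe n wu wt) :
    (∀ k ∈ Finset.Icc 1 n, pt k = pu k) ∨
      ∃ l, 1 ≤ l ∧ l ≤ n ∧ colT pt l < colT pu l ∧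
        ∀ m, l < m → m ≤ n → colT pt m = colT pu m :=
  bruhat_implies_lex_general n lam pu pt ptau hu ht htau wu wt hwu hwt hbr
end

section
/- Let μ, λ be partitions of n, u a standard μ-tableau, t a standard λ-tableau, and let η = shape(u with entry n removed) and θ = shape(t with entry n removed). If η ≤ θ in dominance order (with the convention that η ≤ θ means all partial sums of θ are at most those of η) and col_u(n) ≤ col_t(n), then μ ≤ λ in the dominance order. -/
lemma IsStd.one_le_colT {lam : ℕ → ℕ} {n : ℕ} {p : ℕ → ℕ × ℕ} (h : IsStd lam n p)
    {k : ℕ} (hk : k ∈ Finset.Icc 1 n) : 1 ≤ colT p k :=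
  (h.1.1 k (by simpa using hk)).1

lemma IsStd.resShape_eq {lam : ℕ → ℕ} {n : ℕ} {p : ℕ → ℕ × ℕ} (h : IsStd lam n p)
    {j : ℕ} (hj : 1 ≤ j) : resShape p n j = lam j := by
  obtain ⟨⟨hbox, hinj, hsurj⟩, -, -⟩ := h
  simp only [Nat.zero_add] at hbox hinj hsurj
  rw [resShape, ← add_tsub_cancel_right (lam j) 1, ← Nat.card_Icc]
  refine Finset.card_bij (fun k _ => (p k).1) ?_ ?_ ?_
  · intro k hk
    obtain ⟨hkn, hkj⟩ := Finset.mem_filter.mp hk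
    obtain ⟨-, hrow, hle⟩ := hbox k hkn
    exact Finset.mem_Icc.mpr ⟨hrow, hkj ▸ hle⟩
  · intro k hk l hl hrow
    obtain ⟨hkn, hkj⟩ := Finset.mem_filter.mp hk
    obtain ⟨hln, hlj⟩ := Finset.mem_filter.mp hl
    exact hinj k hkn l hln (Prod.ext hrow (hkj.trans hlj.symm))
  · intro r hr
    obtain ⟨hr1, hr2⟩ := Finset.mem_Icc.mp hr
    obtain ⟨k, hk, hpk⟩ := hsurj (r, j) hj hr1 hr2
    exact ⟨k, Finset.mem_filter.mpr ⟨hk, by simp [colT, hpk]⟩, by simp [hpk]⟩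

lemma IsStd.psum_resShape {lam : ℕ → ℕ} {n : ℕ} {p : ℕ → ℕ × ℕ} (h : IsStd lam n p)
    (k : ℕ) : psum (fun j => resShape p n j) k = psum lam k :=
  Finset.sum_congr rfl fun _ hj => h.resShape_eq (Finset.mem_Icc.mp hj).1

theorem dominance_of_shapes_from_restriction_general (n : ℕ) (mu lam : ℕ → ℕ)
    (pu pt : ℕ → ℕ × ℕ) (hu : IsStd mu n pu) (ht : IsStd lam n pt)
    (hshape : Dominates (fun j => resShape pt (n-1) j)
      (fun j => resShape pu (n-1) j))
    (hcol : colT pu n ≤ colT pt n) :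
    Dominates lam mu := by
  intro k
  rw [← hu.psum_resShape, ← ht.psum_resShape]
  cases n with
  | zero => exact hshape k
  | succ m =>
    have hpu : 1 ≤ colT pu (m + 1) := hu.one_le_colT (by simp)
    rw [psum_resShape_succ, psum_resShape_succ]
    have hm := hshape k
    simp only [Nat.add_sub_cancel, Finset.mem_Icc] at hm ⊢
    split_ifs <;> omega

/-- if the shapes after removing `n` are dominance-comparable and
`col_u(n) ≤ col_t(n)`, then `μ ≤ λ` in dominance order. -/
theorem dominance_of_shapes_from_restriction (n : ℕ) (mu lam : ℕ → ℕ)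
    (hmu : IsPartition n mu) (hlam : IsPartition n lam)
    (pu pt : ℕ → ℕ × ℕ) (hu : IsStd mu n pu) (ht : IsStd lam n pt)
    (hshape : Dominates (fun j => resShape pt (n-1) j)
      (fun j => resShape pu (n-1) j))
    (hcol : colT pu n ≤ colT pt n) :
    Dominates lam mu :=
  dominance_of_shapes_from_restriction_general n mu lam pu pt hu ht hshape hcol
end

section
/- Let μ, λ be partitions of n and (u,t), (v,x) ∈ STD(μ) × STD(λ). If (u,t) and (v,x) are paired dual Knuth equivalent, then u ≤ t in the extended dominance order if and only if v ≤ x. -/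
/-!
A dual Knuth move of index `k` exchanges the entries `k` and `k+1`, which form an ascent
in both tableaux of a paired move. Hence the restrictions to the entries `≤ m` keep their
shapes for every `m ≠ k`, and the only new comparison, at `m = k`, is forced by those at
`k - 1` and `k + 1`: when two boxes are added in the same column order to both shapes,
dominance before and after adding both survives adding just the first one.
-/

open Finset

def leftCount (p : ℕ → ℕ × ℕ) (m K : ℕ) : ℕ :=
  #{l ∈ Icc 1 m | colT p l ∈ Icc 1 K}

lemma psum_resShape_s5 (p : ℕ → ℕ × ℕ) (m K : ℕ) :
    psum (fun j => resShape p m j) K = leftCount p m K :=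
  sum_card_fiberwise_eq_card_filter _ _ _

lemma extDomLe_iff_leftCount (n : ℕ) (pu pt : ℕ → ℕ × ℕ) :
    ExtDomLe n pu pt ↔ ∀ m ∈ Icc 1 n, ∀ K, leftCount pt m K ≤ leftCount pu m K := by
  simp only [ExtDomLe, Dominates, psum_resShape_s5]

lemma leftCount_zero (p : ℕ → ℕ × ℕ) (K : ℕ) : leftCount p 0 K = 0 := rfl

lemma leftCount_succ (p : ℕ → ℕ × ℕ) (m K : ℕ) :
    leftCount p (m + 1) K = leftCount p m K + if colT p (m + 1) ∈ Icc 1 K then 1 else 0 := by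
  simp only [leftCount, card_filter, sum_Icc_succ_top (Nat.le_add_left 1 m)]

lemma swap_mem_Icc_iff {k m l : ℕ} (hk : 1 ≤ k) (hm : m ≠ k) :
    Equiv.swap k (k + 1) l ∈ Icc 1 m ↔ l ∈ Icc 1 m := by
  simp only [Equiv.swap_apply_def, mem_Icc]
  split_ifs <;> omega

lemma leftCount_swap {k m : ℕ} {p p' : ℕ → ℕ × ℕ}
    (hswap : ∀ l, p' l = p (Equiv.swap k (k + 1) l)) (hk : 1 ≤ k) (hm : m ≠ k) (K : ℕ) :
    leftCount p' m K = leftCount p m K :=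
  card_equiv (Equiv.swap k (k + 1)) fun l => by
    rw [mem_filter, mem_filter, swap_mem_Icc_iff hk hm, colT, hswap]; rfl

lemma add_le_add_of_le_of_add_add_le {a b α α' β β' : ℕ}
    (hα : α' ≤ α) (hα1 : α ≤ 1) (hβ : β' ≤ β) (hβ1 : β ≤ 1)
    (hab : a ≤ b) (h : a + α + α' ≤ b + β + β') :
    a + α ≤ b + β ∧ a + α' ≤ b + β' := by
  omega

lemma ite_mem_Icc_antitone {c c' K : ℕ} (hc : 1 ≤ c) (hcc' : c ≤ c') :
    (if c' ∈ Icc 1 K then 1 else 0) ≤ if c ∈ Icc 1 K then 1 else 0 := by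
  simp only [mem_Icc]
  split_ifs <;> omega

def SameColOrder (p q : ℕ → ℕ × ℕ) (k : ℕ) : Prop :=
  (colT p k ≤ colT p (k + 1) ∧ colT q k ≤ colT q (k + 1)) ∨
    (colT p (k + 1) ≤ colT p k ∧ colT q (k + 1) ≤ colT q k)

section
variable {p q : ℕ → ℕ × ℕ} {k : ℕ}

lemma leftCount_le_of_le_pred_of_le_succ (hord : SameColOrder p q k)
    (hp : 1 ≤ min (colT p k) (colT p (k + 1))) (hq : 1 ≤ min (colT q k) (colT q (k + 1)))
    {K : ℕ} (hk : 1 ≤ k) (hpred : leftCount q (k - 1) K ≤ leftCount p (k - 1) K)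
    (hsucc : leftCount q (k + 1) K ≤ leftCount p (k + 1) K) :
    leftCount q k K ≤ leftCount p k K := by
  obtain ⟨j, rfl⟩ : ∃ j, k = j + 1 := ⟨k - 1, by omega⟩
  rw [Nat.add_sub_cancel] at hpred
  simp only [leftCount_succ] at hsucc ⊢
  have hind : ∀ c : ℕ, (if c ∈ Icc 1 K then 1 else 0) ≤ 1 := fun _ => ite_le_one le_rfl zero_le_one
  rcases hord with ⟨hpk, hqk⟩ | ⟨hpk, hqk⟩
  · exact (add_le_add_of_le_of_add_add_le (ite_mem_Icc_antitone (by omega) hqk) (hind _)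
      (ite_mem_Icc_antitone (by omega) hpk) (hind _) hpred (by omega)).1
  · exact (add_le_add_of_le_of_add_add_le (ite_mem_Icc_antitone (by omega) hqk) (hind _)
      (ite_mem_Icc_antitone (by omega) hpk) (hind _) hpred (by omega)).2

lemma extDomLe_iff_forall_ne (n : ℕ) (hord : SameColOrder p q k)
    (hp : 1 ≤ min (colT p k) (colT p (k + 1))) (hq : 1 ≤ min (colT q k) (colT q (k + 1)))
    (hk : 1 ≤ k) (hkn : k + 1 ≤ n) :
    ExtDomLe n p q ↔ ∀ m ∈ Icc 1 n, m ≠ k → ∀ K, leftCount q m K ≤ leftCount p m K := by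
  rw [extDomLe_iff_leftCount]
  refine ⟨fun h m hm _ => h m hm, fun h m hm K => ?_⟩
  rcases eq_or_ne m k with rfl | hmk
  · refine leftCount_le_of_le_pred_of_le_succ hord hp hq hk ?_ (h _ (by simp; omega) (by omega) K)
    rcases Nat.eq_zero_or_pos (m - 1) with hm0 | hm0
    · simp only [hm0, leftCount_zero, le_refl]
    · exact h _ (by simp; omega) (by omega) K
  · exact h m hm hmk K

end

lemma extDomLe_swap_iff {n k : ℕ} {pu pt pv px : ℕ → ℕ × ℕ} (hk : 1 ≤ k) (hkn : k + 1 ≤ n)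
    (hv : ∀ l, pv l = pu (Equiv.swap k (k + 1) l)) (hx : ∀ l, px l = pt (Equiv.swap k (k + 1) l))
    (hu_pos : 1 ≤ colT pu k) (ht_pos : 1 ≤ colT pt k)
    (hu_asc : colT pu k < colT pu (k + 1)) (ht_asc : colT pt k < colT pt (k + 1)) :
    ExtDomLe n pu pt ↔ ExtDomLe n pv px := by
  have hcol : ∀ {p p' : ℕ → ℕ × ℕ}, (∀ l, p' l = p (Equiv.swap k (k + 1) l)) →
      colT p' k = colT p (k + 1) ∧ colT p' (k + 1) = colT p k := fun h => by
    simp only [colT, h, Equiv.swap_apply_left, Equiv.swap_apply_right, and_self]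
  obtain ⟨hvk, hvk'⟩ := hcol hv
  obtain ⟨hxk, hxk'⟩ := hcol hx
  rw [extDomLe_iff_forall_ne n (Or.inl ⟨hu_asc.le, ht_asc.le⟩) (by omega) (by omega) hk hkn,
    extDomLe_iff_forall_ne n (Or.inr ⟨by omega, by omega⟩) (by omega) (by omega) hk hkn]
  refine forall₂_congr fun m _ => imp_congr_right fun hmk => forall_congr' fun K => ?_
  rw [leftCount_swap hv hk hmk, leftCount_swap hx hk hmk]

lemma DKMove.ascent {lam : ℕ → ℕ} {n k : ℕ} {pu pv : ℕ → ℕ × ℕ} (h : DKMove lam n pu pv k) :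
    1 ≤ k ∧ k + 1 ≤ n ∧ (∀ l, pv l = pu (Equiv.swap k (k + 1) l)) ∧
      1 ≤ colT pu k ∧ colT pu k < colT pu (k + 1) := by
  rcases h with ⟨hu, -, -, hswap, -, hnd, ⟨hk, hkn, -⟩, -⟩ | ⟨hu, -, -, hswap, -, hnd, ⟨hk, hkn, -⟩, -⟩ <;>
  · simp only [inD, not_and, not_le] at hnd
    exact ⟨by omega, by omega, hswap, (hu.1.1 k (by simp; omega)).1, hnd (by omega) (by omega)⟩

lemma PairedDKMove.extDomLe_iff {mu lam : ℕ → ℕ} {n : ℕ} {a b : (ℕ → ℕ × ℕ) × (ℕ → ℕ × ℕ)}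
    (h : PairedDKMove mu lam n a b) : ExtDomLe n a.1 a.2 ↔ ExtDomLe n b.1 b.2 := by
  obtain ⟨k, hmove⟩ := h
  have hmoves : DKMove mu n a.1 b.1 k ∧ DKMove lam n a.2 b.2 k := by
    rcases hmove with ⟨h1, h2⟩ | ⟨h1, h2⟩
    exacts [⟨Or.inl h1, Or.inl h2⟩, ⟨Or.inr h1, Or.inr h2⟩]
  obtain ⟨hk, hkn, hv, hu_pos, hu_asc⟩ := hmoves.1.ascent
  obtain ⟨-, -, hx, ht_pos, ht_asc⟩ := hmoves.2.ascent
  exact extDomLe_swap_iff hk hkn hv hx hu_pos ht_pos hu_asc ht_asc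

lemma PairedDKEquiv.extDomLe_iff {mu lam : ℕ → ℕ} {n : ℕ} {a b : (ℕ → ℕ × ℕ) × (ℕ → ℕ × ℕ)}
    (h : PairedDKEquiv mu lam n a b) : ExtDomLe n a.1 a.2 ↔ ExtDomLe n b.1 b.2 := by
  induction h with
  | refl => rfl
  | tail _ hstep ih => exact ih.trans (hstep.elim (·.extDomLe_iff) (·.extDomLe_iff.symm))

theorem pairedDK_preserves_extDom_general (n : ℕ) (mu lam : ℕ → ℕ)
    (pu pt pv px : ℕ → ℕ × ℕ)
    (heq : PairedDKEquiv mu lam n (pu, pt) (pv, px)) :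
    ExtDomLe n pu pt ↔ ExtDomLe n pv px :=
  heq.extDomLe_iff

/-- paired dual Knuth equivalence preserves the extended
dominance order between the two components. -/
theorem pairedDK_preserves_extDom (n : ℕ) (mu lam : ℕ → ℕ)
    (hmu : IsPartition n mu) (hlam : IsPartition n lam)
    (pu pt pv px : ℕ → ℕ × ℕ)
    (hu : IsStd mu n pu) (ht : IsStd lam n pt)
    (hv : IsStd mu n pv) (hx : IsStd lam n px)
    (heq : PairedDKEquiv mu lam n (pu, pt) (pv, px)) :
    ExtDomLe n pu pt ↔ ExtDomLe n pv px :=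
  pairedDK_preserves_extDom_general n mu lam pu pt pv px heq
end

section
/- Let μ, λ be partitions of n and (u,t), (v,x) ∈ STD(μ) × STD(λ) with (u,t) paired dual Knuth equivalent to (v,x). Then l(v) − l(u) = l(x) − l(t), where l(t) denotes the Coxeter length of the permutation perm(t) associated to the tableau t. Consequently, u ≤_L v in the left weak order if and only if t ≤_L x. -/
/-!
A dual Knuth move of index `k` turns a standard tableau `t` into `s_k t`, and `k` is an ascent
of `t`, so the box of `k` carries a smaller entry of `τ_λ` than the box of `k + 1`; hence
`perm(s_k t) = s_k perm(t)` with one more inversion. Along a paired equivalence both components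
are therefore multiplied on the left by the same permutation `σ`, with the same change of
length. The left weak order is `x ≤_L y` iff `y = s_{i_r} ⋯ s_{i_1} x` with
`l(y) = l(x) + r`; since every `s_i` changes the length by exactly one, this reduced-word
condition only depends on `σ` and on the length difference, so it transfers from one component
to the other.
-/

open Finset

section Permutations

variable {n : ℕ}

lemma IsPermOf.exists_eq_s6 {x : ℕ → ℕ} (hx : IsPermOf n x) {m : ℕ} (hm : m ∈ Icc 1 n) :
    ∃ a ∈ Icc 1 n, x a = m :=
  surjOn_of_injOn_of_card_le x (fun a ha => hx.1 a ha)
    (fun a ha b hb h => hx.2.1 a ha b hb h) le_rfl hm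

lemma IsPermOf.surjective {x : ℕ → ℕ} (hx : IsPermOf n x) : Function.Surjective x := by
  intro m
  by_cases hm : m ∈ Icc 1 n
  · obtain ⟨a, -, ha⟩ := hx.exists_eq_s6 hm
    exact ⟨a, ha⟩
  · exact ⟨m, hx.2.2 m hm⟩

lemma swap_succ_mem_Icc {i m : ℕ} (hi : 1 ≤ i) (hin : i + 1 ≤ n) (hm : m ∈ Icc 1 n) :
    Equiv.swap i (i + 1) m ∈ Icc 1 n := by
  simp only [mem_Icc, Equiv.swap_apply_def] at *
  split_ifs <;> omega

lemma IsPermOf.swap_comp {x : ℕ → ℕ} (hx : IsPermOf n x) {i : ℕ} (hi : 1 ≤ i)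
    (hin : i + 1 ≤ n) : IsPermOf n (Equiv.swap i (i + 1) ∘ x) := by
  refine ⟨fun k hk => swap_succ_mem_Icc hi hin (hx.1 k hk),
    fun k hk l hl h => hx.2.1 k hk l hl (Equiv.injective _ h), fun k hk => ?_⟩
  rw [Function.comp_apply, hx.2.2 k hk]
  rw [mem_Icc] at hk
  exact Equiv.swap_apply_of_ne_of_ne (by omega) (by omega)

lemma swap_succ_lt_swap_succ_iff {i u v : ℕ} (h : ¬(u = i ∧ v = i + 1))
    (h' : ¬(u = i + 1 ∧ v = i)) :
    Equiv.swap i (i + 1) u < Equiv.swap i (i + 1) v ↔ u < v := by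
  simp only [Equiv.swap_apply_def]
  split_ifs <;> omega

lemma lenInv_swap_comp_of_lt {x : ℕ → ℕ} (hx : IsPermOf n x) {i a b : ℕ}
    (ha : a ∈ Icc 1 n) (hb : b ∈ Icc 1 n) (hxa : x a = i) (hxb : x b = i + 1) (hab : a < b) :
    lenInv n (Equiv.swap i (i + 1) ∘ x) = lenInv n x + 1 := by
  have hinv : (Icc 1 n ×ˢ Icc 1 n).filter (fun q => q.1 < q.2 ∧
        (Equiv.swap i (i + 1) ∘ x) q.2 < (Equiv.swap i (i + 1) ∘ x) q.1) =
      insert (a, b) ((Icc 1 n ×ˢ Icc 1 n).filter (fun q => q.1 < q.2 ∧ x q.2 < x q.1)) := by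
    ext ⟨c, d⟩
    simp only [mem_insert, mem_filter, mem_product, Prod.mk.injEq, Function.comp_apply]
    by_cases hcd : c = a ∧ d = b
    · obtain ⟨rfl, rfl⟩ := hcd
      simp [ha, hb, hab, hxa, hxb]
    · simp only [hcd, false_or]
      refine and_congr_right fun ⟨hc, hd⟩ => and_congr_right fun hlt =>
        swap_succ_lt_swap_succ_iff ?_ ?_
      · rintro ⟨hdi, hci⟩
        have : d = a := hx.2.1 d hd a ha (hdi.trans hxa.symm)
        have : c = b := hx.2.1 c hc b hb (hci.trans hxb.symm)
        omega
      · rintro ⟨hdi, hci⟩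
        exact hcd ⟨hx.2.1 c hc a ha (hci.trans hxa.symm), hx.2.1 d hd b hb (hdi.trans hxb.symm)⟩
  rw [lenInv, lenInv, hinv, card_insert_of_notMem]
  simp [hxa, hxb]

lemma lenInv_swap_comp {x : ℕ → ℕ} (hx : IsPermOf n x) {i : ℕ} (hi : 1 ≤ i)
    (hin : i + 1 ≤ n) :
    lenInv n (Equiv.swap i (i + 1) ∘ x) = lenInv n x + 1 ∨
      lenInv n x = lenInv n (Equiv.swap i (i + 1) ∘ x) + 1 := by
  obtain ⟨a, ha, hxa⟩ := hx.exists_eq_s6 (m := i) (by rw [mem_Icc]; omega)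
  obtain ⟨b, hb, hxb⟩ := hx.exists_eq_s6 (m := i + 1) (by rw [mem_Icc]; omega)
  rcases lt_trichotomy a b with hab | rfl | hab
  · exact .inl (lenInv_swap_comp_of_lt hx ha hb hxa hxb hab)
  · omega
  · right
    have h := lenInv_swap_comp_of_lt (i := i) (hx.swap_comp hi hin) hb ha (by simp [hxb])
      (by simp [hxa]) hab
    rwa [← Function.comp_assoc, ← Equiv.Perm.coe_mul, Equiv.swap_mul_self, Equiv.Perm.coe_one,
      Function.id_comp] at h

def swapWord (L : List ℕ) : Equiv.Perm ℕ := (L.map fun i => Equiv.swap i (i + 1)).prod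

lemma coe_swapWord_cons (i : ℕ) (L : List ℕ) :
    ⇑(swapWord (i :: L)) = Equiv.swap i (i + 1) ∘ swapWord L := by
  simp [swapWord]

lemma IsPermOf.swapWord_comp {x : ℕ → ℕ} (hx : IsPermOf n x) {L : List ℕ}
    (hL : ∀ i ∈ L, 1 ≤ i ∧ i + 1 ≤ n) : IsPermOf n (swapWord L ∘ x) := by
  induction L with
  | nil => simpa [swapWord] using hx
  | cons i L ih =>
    have hi := hL i List.mem_cons_self
    rw [coe_swapWord_cons, Function.comp_assoc]
    exact (ih fun j hj => hL j (List.mem_cons_of_mem _ hj)).swap_comp hi.1 hi.2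

lemma lenInv_swapWord_comp_le {x : ℕ → ℕ} (hx : IsPermOf n x) {L : List ℕ}
    (hL : ∀ i ∈ L, 1 ≤ i ∧ i + 1 ≤ n) :
    lenInv n (swapWord L ∘ x) ≤ lenInv n x + L.length := by
  induction L with
  | nil => simp [swapWord]
  | cons i L ih =>
    have hi := hL i List.mem_cons_self
    have hL' : ∀ j ∈ L, 1 ≤ j ∧ j + 1 ≤ n := fun j hj => hL j (List.mem_cons_of_mem _ hj)
    rw [coe_swapWord_cons, Function.comp_assoc, List.length_cons]
    have := ih hL'
    rcases lenInv_swap_comp (hx.swapWord_comp hL') hi.1 hi.2 with h | h <;> omega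

/-- By `lenInv_swapWord_comp_le`, no letter of such a word can lower the length. -/
lemma weakLe_swapWord_comp {x : ℕ → ℕ} (hx : IsPermOf n x) {L : List ℕ}
    (hL : ∀ i ∈ L, 1 ≤ i ∧ i + 1 ≤ n)
    (hlen : lenInv n (swapWord L ∘ x) = lenInv n x + L.length) :
    WeakLe n x (swapWord L ∘ x) := by
  induction L with
  | nil => exact Relation.ReflTransGen.refl
  | cons i L ih =>
    have hi := hL i List.mem_cons_self
    have hL' : ∀ j ∈ L, 1 ≤ j ∧ j + 1 ≤ n := fun j hj => hL j (List.mem_cons_of_mem _ hj)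
    rw [coe_swapWord_cons, Function.comp_assoc, List.length_cons] at *
    have hle := lenInv_swapWord_comp_le hx hL'
    have hprefix : lenInv n (swapWord L ∘ x) = lenInv n x + L.length := by
      rcases lenInv_swap_comp (hx.swapWord_comp hL') hi.1 hi.2 with h | h <;> omega
    exact (ih hL' hprefix).tail ⟨by omega, i, hi.1, hi.2, fun _ => rfl⟩

lemma WeakLe.exists_swapWord {x y : ℕ → ℕ} (hx : IsPermOf n x) (h : WeakLe n x y) :
    ∃ L : List ℕ, (∀ i ∈ L, 1 ≤ i ∧ i + 1 ≤ n) ∧ y = swapWord L ∘ x ∧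
      lenInv n y = lenInv n x + L.length := by
  induction h with
  | refl => exact ⟨[], by simp, by simp [swapWord], rfl⟩
  | tail _ hbc ih =>
    obtain ⟨L, hL, rfl, hlen⟩ := ih
    obtain ⟨hlt, i, hi1, hin, hstep⟩ := hbc
    have hc : _ = Equiv.swap i (i + 1) ∘ (swapWord L ∘ x) := funext hstep
    refine ⟨i :: L, ?_, by rw [hc, coe_swapWord_cons, Function.comp_assoc], ?_⟩
    · exact List.forall_mem_cons.mpr ⟨⟨hi1, hin⟩, hL⟩
    · rw [hc] at hlt ⊢
      rcases lenInv_swap_comp (hx.swapWord_comp hL) hi1 hin with h | h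
      · rw [h, hlen, List.length_cons]; ring
      · omega

def PairedLeftMul (n : ℕ) (a b : (ℕ → ℕ) × (ℕ → ℕ)) : Prop :=
  ∃ σ : Equiv.Perm ℕ, b.1 = σ ∘ a.1 ∧ b.2 = σ ∘ a.2 ∧
    (lenInv n b.1 : ℤ) - lenInv n a.1 = (lenInv n b.2 : ℤ) - lenInv n a.2

namespace PairedLeftMul

variable {a b c : (ℕ → ℕ) × (ℕ → ℕ)}

protected lemma refl (a : (ℕ → ℕ) × (ℕ → ℕ)) : PairedLeftMul n a a :=
  ⟨1, rfl, rfl, by ring⟩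

protected lemma symm (h : PairedLeftMul n a b) : PairedLeftMul n b a := by
  obtain ⟨σ, h1, h2, hlen⟩ := h
  refine ⟨σ⁻¹, ?_, ?_, by linarith⟩ <;> ext m <;> simp [h1, h2]

protected lemma trans (hab : PairedLeftMul n a b) (hbc : PairedLeftMul n b c) :
    PairedLeftMul n a c := by
  obtain ⟨σ, h1, h2, hlen⟩ := hab
  obtain ⟨τ, h1', h2', hlen'⟩ := hbc
  refine ⟨τ * σ, ?_, ?_, by linarith⟩ <;> simp [h1, h2, h1', h2', Function.comp_assoc]

protected lemma swap (h : PairedLeftMul n a b) : PairedLeftMul n a.swap b.swap := by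
  obtain ⟨σ, h1, h2, hlen⟩ := h
  exact ⟨σ, h2, h1, hlen.symm⟩

lemma weakLe_of_weakLe (h : PairedLeftMul n a b) (ha₁ : IsPermOf n a.1) (ha₂ : IsPermOf n a.2)
    (hw : WeakLe n a.1 b.1) : WeakLe n a.2 b.2 := by
  obtain ⟨σ, h1, h2, hlen⟩ := h
  obtain ⟨L, hL, hb₁, hlen₁⟩ := hw.exists_swapWord ha₁
  have hσ : ⇑σ = swapWord L := ha₁.surjective.right_cancellable.mp (h1.symm.trans hb₁)
  rw [hσ] at h2
  rw [h2] at hlen ⊢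
  exact weakLe_swapWord_comp ha₂ hL (by omega)

end PairedLeftMul

end Permutations

section Tableaux

variable {lam : ℕ → ℕ} {n : ℕ} {ptau p pa pb : ℕ → ℕ × ℕ}

lemma IsTab.injOn (h : IsTab lam n p) : Set.InjOn p (Icc 1 n) := by
  intro k hk l hl hkl
  exact h.2.1 k (by simpa using hk) l (by simpa using hl) hkl

lemma IsPermTab.unique (htau : Set.InjOn ptau (Icc 1 n)) {w w' : ℕ → ℕ}
    (hw : IsPermTab n ptau p w) (hw' : IsPermTab n ptau p w') : w = w' := by
  funext k
  by_cases hk : k ∈ Icc 1 n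
  · obtain ⟨j, hj, hwj⟩ := hw'.1.exists_eq_s6 (hw.1.1 k hk)
    have : j = k := htau hj hk (by rw [← hw'.2 j hj, ← hw.2 k hk, hwj])
    rw [← hwj, this]
  · rw [hw.1.2.2 k hk, hw'.1.2.2 k hk]

/-- The witness is `p⁻¹ ∘ τ` on `[1, n]`. -/
lemma exists_isPermTab (htau : IsTab lam n ptau) (hp : IsTab lam n p) :
    ∃ w, IsPermTab n ptau p w := by
  have hbox : ∀ k ∈ Icc 1 n, ∃ e ∈ (Icc 1 n : Set ℕ), p e = ptau k := fun k hk => by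
    obtain ⟨hcol, hrow, hlam⟩ := htau.1 k (by simpa using hk)
    simpa using hp.2.2 (ptau k) hcol hrow hlam
  refine ⟨fun k => if k ∈ Icc 1 n then Function.invFunOn p (Icc 1 n) (ptau k) else k,
    ⟨fun k hk => ?_, fun k hk l hl hkl => ?_, fun k hk => if_neg hk⟩, fun k hk => ?_⟩
  · simpa [hk] using Function.invFunOn_mem (hbox k hk)
  · refine htau.injOn hk hl ?_
    simp only [hk, hl, if_true] at hkl
    rw [← Function.invFunOn_eq (hbox k hk), ← Function.invFunOn_eq (hbox l hl), hkl]
  · simpa [hk] using Function.invFunOn_eq (hbox k hk)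

/-- `perm(t)`, relative to `τ`; a junk value unless `t` and `τ` are tableaux of the same shape. -/
noncomputable def tabPerm (n : ℕ) (ptau p : ℕ → ℕ × ℕ) : ℕ → ℕ :=
  Classical.epsilon (IsPermTab n ptau p)

lemma isPermTab_tabPerm (htau : IsTab lam n ptau) (hp : IsTab lam n p) :
    IsPermTab n ptau p (tabPerm n ptau p) :=
  Classical.epsilon_spec (exists_isPermTab htau hp)

lemma IsPermTab.tabPerm_eq (htau : Set.InjOn ptau (Icc 1 n)) {w : ℕ → ℕ}
    (hw : IsPermTab n ptau p w) : tabPerm n ptau p = w :=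
  (Classical.epsilon_spec ⟨w, hw⟩).unique htau hw

lemma IsPermTab.swap_comp {w : ℕ → ℕ} (hw : IsPermTab n ptau pa w) {k : ℕ} (hk : 1 ≤ k)
    (hkn : k + 1 ≤ n) (hpb : ∀ m, pb m = pa (Equiv.swap k (k + 1) m)) :
    IsPermTab n ptau pb (Equiv.swap k (k + 1) ∘ w) :=
  ⟨hw.1.swap_comp hk hkn, fun m hm => by simp [hpb, hw.2 m hm]⟩

lemma IsSuperstandard.monotoneOn_colT (h : IsSuperstandard lam n ptau) :
    MonotoneOn (colT ptau) (Set.Icc 1 n) :=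
  monotoneOn_of_le_succ Set.ordConnected_Icc fun k _ hk hk' => by
    rw [Order.succ_eq_add_one] at hk' ⊢
    exact h.2.2 k hk.1 hk'.2

lemma DKMove.inA {k : ℕ} (h : DKMove lam n pa pb k) : inA 0 n pa k := by
  rcases h with ⟨-, -, hk, -, -, hnd, hd, -⟩ | ⟨-, -, hk, -, -, hnd, hd, -⟩ <;>
  · obtain ⟨hk1, hkn, -⟩ := hd
    exact ⟨hk1, hkn, lt_of_not_ge fun hle => hnd ⟨hk1, hkn, hle⟩⟩

lemma DKMove.tabPerm_eq (htau : IsTab lam n ptau) {k : ℕ} (h : DKMove lam n pa pb k) :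
    tabPerm n ptau pb = Equiv.swap k (k + 1) ∘ tabPerm n ptau pa := by
  obtain ⟨hk, hkn, -⟩ := h.inA
  obtain ⟨hsa, -, -, hswap, -⟩ | ⟨hsa, -, -, hswap, -⟩ := h <;>
  · refine IsPermTab.tabPerm_eq htau.injOn ?_
    exact (isPermTab_tabPerm htau hsa.1).swap_comp (by omega) (by omega) hswap

/-- Since `k` is an ascent of `pa`, the box of `k` comes before the box of `k + 1` in `τ_λ`, so
the swap adds an inversion. -/
lemma DKMove.lenInv_tabPerm (htau : IsSuperstandard lam n ptau) {k : ℕ}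
    (h : DKMove lam n pa pb k) :
    lenInv n (tabPerm n ptau pb) = lenInv n (tabPerm n ptau pa) + 1 := by
  obtain ⟨hk, hkn, hcol⟩ := h.inA
  have hsa : IsStd lam n pa := by rcases h with h | h <;> exact h.1
  have hw := isPermTab_tabPerm htau.1 hsa.1
  obtain ⟨a, ha, hwa⟩ := hw.1.exists_eq_s6 (m := k) (by rw [mem_Icc]; omega)
  obtain ⟨b, hb, hwb⟩ := hw.1.exists_eq_s6 (m := k + 1) (by rw [mem_Icc]; omega)
  have hab : a < b := by
    refine htau.monotoneOn_colT.reflect_lt (by simpa using ha) (by simpa using hb) ?_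
    simpa only [colT, ← hw.2 a ha, ← hw.2 b hb, hwa, hwb] using hcol
  rw [h.tabPerm_eq htau.1]
  exact lenInv_swap_comp_of_lt hw.1 ha hb hwa hwb hab

end Tableaux

section PairedDK

variable {mu lam : ℕ → ℕ} {n : ℕ} {ptauMu ptauLam : ℕ → ℕ × ℕ}
  {a b : (ℕ → ℕ × ℕ) × (ℕ → ℕ × ℕ)}

lemma PairedDKMove.pairedLeftMul (htauMu : IsSuperstandard mu n ptauMu)
    (htauLam : IsSuperstandard lam n ptauLam) (h : PairedDKMove mu lam n a b) :
    PairedLeftMul n (Prod.map (tabPerm n ptauMu) (tabPerm n ptauLam) a)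
      (Prod.map (tabPerm n ptauMu) (tabPerm n ptauLam) b) := by
  obtain ⟨k, h₁, h₂⟩ : ∃ k, DKMove mu n a.1 b.1 k ∧ DKMove lam n a.2 b.2 k := by
    obtain ⟨k, ⟨h₁, h₂⟩ | ⟨h₁, h₂⟩⟩ := h
    exacts [⟨k, .inl h₁, .inl h₂⟩, ⟨k, .inr h₁, .inr h₂⟩]
  refine ⟨Equiv.swap k (k + 1), h₁.tabPerm_eq htauMu.1, h₂.tabPerm_eq htauLam.1, ?_⟩
  simp only [Prod.map_fst, Prod.map_snd, h₁.lenInv_tabPerm htauMu, h₂.lenInv_tabPerm htauLam]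
  push_cast
  ring

lemma PairedDKEquiv.pairedLeftMul (htauMu : IsSuperstandard mu n ptauMu)
    (htauLam : IsSuperstandard lam n ptauLam) (h : PairedDKEquiv mu lam n a b) :
    PairedLeftMul n (Prod.map (tabPerm n ptauMu) (tabPerm n ptauLam) a)
      (Prod.map (tabPerm n ptauMu) (tabPerm n ptauLam) b) := by
  induction h with
  | refl => exact .refl _
  | tail _ hbc ih =>
    rcases hbc with hbc | hcb
    · exact ih.trans (hbc.pairedLeftMul htauMu htauLam)
    · exact ih.trans (hcb.pairedLeftMul htauMu htauLam).symm

end PairedDK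

theorem pairedDK_preserves_length_difference_and_weak_order_general
    (n : ℕ) (mu lam : ℕ → ℕ)
    (pu pt pv px ptauMu ptauLam : ℕ → ℕ × ℕ)
    (htauMu : IsSuperstandard mu n ptauMu)
    (htauLam : IsSuperstandard lam n ptauLam)
    (wu wv wt wx : ℕ → ℕ)
    (hwu : IsPermTab n ptauMu pu wu) (hwv : IsPermTab n ptauMu pv wv)
    (hwt : IsPermTab n ptauLam pt wt) (hwx : IsPermTab n ptauLam px wx)
    (heq : PairedDKEquiv mu lam n (pu, pt) (pv, px)) :
    ((lenInv n wv : ℤ) - lenInv n wu = (lenInv n wx : ℤ) - lenInv n wt) ∧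
      (WeakLe n wu wv ↔ WeakLe n wt wx) := by
  have key : PairedLeftMul n (wu, wt) (wv, wx) := by
    simpa only [Prod.map_apply, hwu.tabPerm_eq htauMu.1.injOn, hwv.tabPerm_eq htauMu.1.injOn,
      hwt.tabPerm_eq htauLam.1.injOn, hwx.tabPerm_eq htauLam.1.injOn]
      using heq.pairedLeftMul htauMu htauLam
  refine ⟨?_, key.weakLe_of_weakLe hwu.1 hwt.1, key.swap.weakLe_of_weakLe hwt.1 hwu.1⟩
  obtain ⟨-, -, -, hlen⟩ := key
  exact hlen

/-- a paired dual Knuth equivalence changes the Coxeter lengths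
of the two components by the same amount; consequently it preserves the left
weak order between the two components. -/
theorem pairedDK_preserves_length_difference_and_weak_order
    (n : ℕ) (mu lam : ℕ → ℕ)
    (hmu : IsPartition n mu) (hlam : IsPartition n lam)
    (pu pt pv px ptauMu ptauLam : ℕ → ℕ × ℕ)
    (hu : IsStd mu n pu) (ht : IsStd lam n pt)
    (hv : IsStd mu n pv) (hx : IsStd lam n px)
    (htauMu : IsSuperstandard mu n ptauMu)
    (htauLam : IsSuperstandard lam n ptauLam)
    (wu wv wt wx : ℕ → ℕ)
    (hwu : IsPermTab n ptauMu pu wu) (hwv : IsPermTab n ptauMu pv wv)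
    (hwt : IsPermTab n ptauLam pt wt) (hwx : IsPermTab n ptauLam px wx)
    (heq : PairedDKEquiv mu lam n (pu, pt) (pv, px)) :
    ((lenInv n wv : ℤ) - lenInv n wu = (lenInv n wx : ℤ) - lenInv n wt) ∧
      (WeakLe n wu wv ↔ WeakLe n wt wx) :=
  pairedDK_preserves_length_difference_and_weak_order_general n mu lam pu pt pv px ptauMu ptauLam
    htauMu htauLam wu wv wt wx hwu hwv hwt hwx heq
end

section
/- Let λ be a partition of n, t a standard λ-tableau, and j a strong descent of t with j − 1 an ascent of t and col_t(j+1) < col_t(j−1). Set v = s_j t and w = s_{j−1} v. Then j − 1 is a strong descent of v, w is standard, j − 1 ∈ D(v), j ∉ D(v), j − 1 ∉ D(w), and j ∉ D(w). Furthermore, if j is a strong ascent of w, then j − 1 is a strong ascent of s_j w, with j ∈ D(s_j w), j − 1 ∉ D(s_j w), j − 1 ∈ D(s_{j−1} s_j w), and j ∉ D(s_{j−1} s_j w). -/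
/-!
Write `x, y, z` for the boxes of `j-1, j, j+1` in `t`. The hypotheses say
`col z < col x < col y`, and a strong descent in a standard tableau goes strictly down,
so `row y < row z`. The tableaux `v`, `w`, `s_j w`, `s_{j-1} s_j w` carry the boxes
`(x,z,y)`, `(z,x,y)`, `(z,y,x)`, `(y,z,x)` at `j-1, j, j+1`, so every descent claim is a
comparison of two of these columns or rows. Standardness of `w` holds because swapping two
consecutive entries that share neither a row nor a column keeps a tableau standard.
-/

open Equiv Finset

theorem swap_succ_mem_Icc_s8 {lo hi k m : ℕ} (hk₁ : lo ≤ k) (hk₂ : k + 1 ≤ hi)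
    (hm : m ∈ Icc lo hi) : swap k (k+1) m ∈ Icc lo hi := by
  simp only [mem_Icc, swap_apply_def] at hm ⊢
  split_ifs <;> omega

theorem lt_or_eq_of_swap_succ_lt {k a b : ℕ} (h : swap k (k+1) a < swap k (k+1) b) :
    a < b ∨ (a = k + 1 ∧ b = k) := by
  simp only [swap_apply_def] at h
  split_ifs at h <;> omega

theorem forall_lt_of_comp_swap {α : Type*} {P : α → α → Prop} {p : ℕ → α} {lo hi k : ℕ}
    (hk₁ : lo ≤ k) (hk₂ : k + 1 ≤ hi)
    (h : ∀ x ∈ Icc lo hi, ∀ y ∈ Icc lo hi, P (p x) (p y) → x < y)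
    (hk : ¬ P (p k) (p (k+1))) :
    ∀ x ∈ Icc lo hi, ∀ y ∈ Icc lo hi, P (p (swap k (k+1) x)) (p (swap k (k+1) y)) → x < y := by
  intro x hx y hy hP
  rcases lt_or_eq_of_swap_succ_lt
      (h _ (swap_succ_mem_Icc_s8 hk₁ hk₂ hx) _ (swap_succ_mem_Icc_s8 hk₁ hk₂ hy) hP) with hxy | ⟨rfl, rfl⟩
  · exact hxy
  · rw [swap_apply_right, swap_apply_left] at hP
    exact absurd hP hk

theorem IsSkewTab.comp_swap {lam mu : ℕ → ℕ} {a n k : ℕ} {p : ℕ → ℕ × ℕ}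
    (hp : IsSkewTab lam mu a n p) (hk₁ : a + 1 ≤ k) (hk₂ : k + 1 ≤ a + n) :
    IsSkewTab lam mu a n (p ∘ swap k (k+1)) := by
  obtain ⟨hbox, hinj, hsurj⟩ := hp
  have hmem : ∀ {m}, m ∈ Icc (a+1) (a+n) → swap k (k+1) m ∈ Icc (a+1) (a+n) :=
    swap_succ_mem_Icc_s8 hk₁ hk₂
  refine ⟨fun m hm => hbox _ (hmem hm), fun x hx y hy hxy => ?_, fun c h₁ h₂ h₃ => ?_⟩
  · exact (swap k (k+1)).injective (hinj _ (hmem hx) _ (hmem hy) hxy)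
  · obtain ⟨m, hm, rfl⟩ := hsurj c h₁ h₂ h₃
    exact ⟨swap k (k+1) m, hmem hm, by simp⟩

theorem IsStdSkew.comp_swap {lam mu : ℕ → ℕ} {a n k : ℕ} {p : ℕ → ℕ × ℕ}
    (hp : IsStdSkew lam mu a n p) (hk₁ : a + 1 ≤ k) (hk₂ : k + 1 ≤ a + n)
    (hrow : rowT p k ≠ rowT p (k+1)) (hcol : colT p k ≠ colT p (k+1)) :
    IsStdSkew lam mu a n (p ∘ swap k (k+1)) := by
  obtain ⟨hshape, hc, hr⟩ := hp
  have hc' := forall_lt_of_comp_swap (P := fun c d : ℕ × ℕ => c.2 = d.2 ∧ c.1 < d.1) (p := p)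
    hk₁ hk₂ (fun x hx y hy h => hc x hx y hy h.1 h.2) (fun h => hcol h.1)
  have hr' := forall_lt_of_comp_swap (P := fun c d : ℕ × ℕ => c.1 = d.1 ∧ c.2 < d.2) (p := p)
    hk₁ hk₂ (fun x hx y hy h => hr x hx y hy h.1 h.2) (fun h => hrow h.1)
  exact ⟨hshape.comp_swap hk₁ hk₂, fun x hx y hy h₁ h₂ => hc' x hx y hy ⟨h₁, h₂⟩,
    fun x hx y hy h₁ h₂ => hr' x hx y hy ⟨h₁, h₂⟩⟩

theorem IsStd.rowT_lt_of_inSD {lam : ℕ → ℕ} {n k : ℕ} {p : ℕ → ℕ × ℕ} (hp : IsStd lam n p)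
    (hk : inSD 0 n p k) : rowT p k < rowT p (k+1) := by
  obtain ⟨⟨hbox, hinj, hsurj⟩, hc, hr⟩ := hp
  obtain ⟨hk₁, hk₂, hcol⟩ := hk
  have hkI : k ∈ Icc (0+1) (0+n) := mem_Icc.2 ⟨hk₁, by omega⟩
  have hkI' : k + 1 ∈ Icc (0+1) (0+n) := mem_Icc.2 ⟨by omega, hk₂⟩
  by_contra! hle
  -- the box in the row of `k+1` and the column of `k` lies in the diagram; its entry `m`
  -- exceeds `k+1` along that row, yet is at most `k` as it sits weakly above `k`
  obtain ⟨m, hm, hpm⟩ := hsurj (rowT p (k+1), colT p k)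
    (by simp only [colT] at hcol ⊢; omega) (hbox _ hkI').2.1 (hle.trans (hbox _ hkI).2.2)
  have hmrow : rowT p m = rowT p (k+1) := by simp [rowT, hpm]
  have hmcol : colT p m = colT p k := by simp [colT, hpm]
  have hkm : k + 1 < m := hr _ hkI' _ hm hmrow.symm (hmcol ▸ hcol)
  rcases hle.lt_or_eq with hlt | heq
  · exact absurd (hc _ hm _ hkI hmcol (hmrow ▸ hlt)) (by omega)
  · exact absurd (hinj _ hm _ hkI (Prod.ext (hmrow.trans heq) hmcol)) (by omega)

theorem IsStd.comp_swap_of_inSD {lam : ℕ → ℕ} {n k : ℕ} {p : ℕ → ℕ × ℕ} (hp : IsStd lam n p)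
    (hk : inSD 0 n p k) : IsStd lam n (p ∘ swap k (k+1)) :=
  IsStdSkew.comp_swap hp hk.1 hk.2.1 (hp.rowT_lt_of_inSD hk).ne hk.2.2.ne'

theorem descents_after_swap_adjacent_general (n : ℕ) (lam : ℕ → ℕ)
    (pt pv pw : ℕ → ℕ × ℕ) (ht : IsStd lam n pt)
    (j : ℕ) (hjSD : inSD 0 n pt j) (hA : inA 0 n pt (j-1))
    (hcol : colT pt (j+1) < colT pt (j-1))
    (hv : ∀ m, pv m = pt (Equiv.swap j (j+1) m))
    (hw : ∀ m, pw m = pv (Equiv.swap (j-1) j m)) :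
    inSD 0 n pv (j-1) ∧ IsStd lam n pw ∧
    inD 0 n pv (j-1) ∧ ¬ inD 0 n pv j ∧
    ¬ inD 0 n pw (j-1) ∧ ¬ inD 0 n pw j ∧
      ∀ pz, (∀ m, pz m = pw (Equiv.swap j (j+1) m)) → inSA 0 n pw j →
        inSA 0 n pz (j-1) ∧ inD 0 n pz j ∧ ¬ inD 0 n pz (j-1) ∧
          ∀ pz2, (∀ m, pz2 m = pz (Equiv.swap (j-1) j m)) →
            inD 0 n pz2 (j-1) ∧ ¬ inD 0 n pz2 j := by
  obtain ⟨i, rfl⟩ : ∃ i, j = i + 1 := ⟨j - 1, by have := hA.1; omega⟩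
  simp only [Nat.add_sub_cancel] at hA hcol hw ⊢
  obtain rfl : pv = pt ∘ swap (i+1) (i+1+1) := funext hv
  obtain rfl : pw = pt ∘ swap (i+1) (i+1+1) ∘ swap i (i+1) := funext hw
  have hvSD : inSD 0 n (pt ∘ swap (i+1) (i+1+1)) i := by
    refine ⟨hA.1, hA.2.1, ?_⟩
    simpa (disch := omega) [colT, swap_apply_of_ne_of_ne] using hcol
  refine ⟨hvSD, (ht.comp_swap_of_inSD hjSD).comp_swap_of_inSD hvSD, ?_⟩
  have hrow := ht.rowT_lt_of_inSD hjSD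
  obtain ⟨-, hn, hzy⟩ := hjSD
  obtain ⟨hi, -, hxy⟩ := hA
  simp only [← funext_iff, forall_eq]
  simp (disch := omega) only [inD, inSA, colT, rowT, Function.comp_apply,
    swap_apply_of_ne_of_ne, swap_apply_left, swap_apply_right] at hcol hrow hzy hxy ⊢
  omega

/-- descent behaviour in the case `i = j-1` with
`col_t(j+1) < col_t(j-1)`. -/
theorem descents_after_swap_adjacent (n : ℕ) (lam : ℕ → ℕ)
    (hlam : IsPartition n lam)
    (pt pv pw : ℕ → ℕ × ℕ) (ht : IsStd lam n pt)
    (j : ℕ) (hjSD : inSD 0 n pt j) (hA : inA 0 n pt (j-1))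
    (hcol : colT pt (j+1) < colT pt (j-1))
    (hv : ∀ m, pv m = pt (Equiv.swap j (j+1) m))
    (hw : ∀ m, pw m = pv (Equiv.swap (j-1) j m)) :
    inSD 0 n pv (j-1) ∧ IsStd lam n pw ∧
    inD 0 n pv (j-1) ∧ ¬ inD 0 n pv j ∧
    ¬ inD 0 n pw (j-1) ∧ ¬ inD 0 n pw j ∧
      ∀ pz, (∀ m, pz m = pw (Equiv.swap j (j+1) m)) → inSA 0 n pw j →
        inSA 0 n pz (j-1) ∧ inD 0 n pz j ∧ ¬ inD 0 n pz (j-1) ∧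
          ∀ pz2, (∀ m, pz2 m = pz (Equiv.swap (j-1) j m)) →
            inD 0 n pz2 (j-1) ∧ ¬ inD 0 n pz2 j :=
  descents_after_swap_adjacent_general n lam pt pv pw ht j hjSD hA hcol hv hw
end
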